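/- arXiv:2312.12900 — 4 statements merged into one kernel-verified Lean document; each statement's English description precedes it below -/
import Mathlib

section
/- Let μ ∈ ℂ, n ∈ ℕ, r ∈ ℂ with r = zw for z,w ∈ ℂ with |zw| < 1. Then the function y(t) = (1-t)^μ · ₂F₁(μ, μ+n; n+1; t) satisfies the ODE 4(1-t)² [t y''(t) + (n+1) y'(t)] = 4μ(μ-1) y(t) for all t in the open unit disk. -/
open Complex

/-- Rising Pochhammer symbol `(a)_k = ∏_{j=0}^{k-1} (a+j)`. -/
noncomputable def poch (a : ℂ) (k : ℕ) : ℂ := ∏ j ∈ Finset.range k, (a + j)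

/-- Gauss hypergeometric series `₂F₁(a,b;c;t)`. -/
noncomputable def F2F1 (a b c t : ℂ) : ℂ :=
  ∑' k : ℕ, poch a k * poch b k / (poch c k * (Nat.factorial k : ℂ)) * t ^ k

/-!
The series `₂F₁(a, b; c; t) = ∑ aₖ tᵏ` converges in the unit disk and its coefficients obey the
two-term recurrence `(k + 1)(c + k) aₖ₊₁ = (a + k)(b + k) aₖ`; comparing coefficients of
`tᵏ`, this recurrence is Gauss's equation `t(1 - t)F'' + (c - (a + b + 1)t)F' - abF = 0`.
For `a = μ`, `b = μ + n`, `c = n + 1`, differentiating `y = (1 - t)^μ F` twice and eliminating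
`F''` with Gauss's equation gives `(1 - t)²(t y'' + (n + 1) y') = μ(μ - 1) y`.
-/

open Topology FormalMultilinearSeries

theorem hasSum_mul_pow_of_hasSum_succ {𝕜 : Type*} [NontriviallyNormedField 𝕜] {b : ℕ → 𝕜}
    {t S : 𝕜} (h : HasSum (fun k => b (k + 1) * t ^ k) S) :
    HasSum (fun k => b k * t ^ k) (b 0 + t * S) := by
  have h' : HasSum (fun k => b (k + 1) * t ^ (k + 1)) (t * S) :=
    (h.mul_left t).congr_fun fun k => by ring
  refine (hasSum_nat_add_iff' 1).mp ?_
  simpa using h'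

theorem deriv_deriv_eq_of_eventually_hasDerivAt {𝕜 F : Type*} [NontriviallyNormedField 𝕜]
    [NormedAddCommGroup F] [NormedSpace 𝕜 F] {f g : 𝕜 → F} {x : 𝕜} {g' : F}
    (hf : ∀ᶠ y in 𝓝 x, HasDerivAt f (g y) y) (hg : HasDerivAt g g' x) :
    deriv (deriv f) x = g' := by
  have hfg : deriv f =ᶠ[𝓝 x] g := hf.mono fun y hy => hy.deriv
  rw [hfg.deriv_eq, hg.deriv]

namespace FormalMultilinearSeries

variable {𝕜 : Type*} [NontriviallyNormedField 𝕜]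

def derivCoeff (a : ℕ → 𝕜) (k : ℕ) : 𝕜 := (k + 1) * a (k + 1)

theorem radius_le_radius_of_norm_le {E F G : Type*} [NormedAddCommGroup E] [NormedSpace 𝕜 E]
    [NormedAddCommGroup F] [NormedSpace 𝕜 F] [NormedAddCommGroup G] [NormedSpace 𝕜 G]
    {p : FormalMultilinearSeries 𝕜 E F} {q : FormalMultilinearSeries 𝕜 E G}
    (h : ∀ n, ‖q n‖ ≤ ‖p n‖) : p.radius ≤ q.radius := by
  refine ENNReal.le_of_forall_nnreal_lt fun r hr => ?_
  obtain ⟨C, -, hC⟩ := p.norm_mul_pow_le_of_lt_radius hr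
  exact q.le_radius_of_bound C fun n =>
    (mul_le_mul_of_nonneg_right (h n) (by positivity)).trans (hC n)

theorem norm_ofScalars_derivCoeff_le (a : ℕ → 𝕜) (n : ℕ) :
    ‖ofScalars 𝕜 (derivCoeff a) n‖ ≤ ‖(ofScalars 𝕜 a).derivSeries n‖ := by
  rw [ofScalars_norm, norm_apply_eq_norm_coef]
  calc ‖derivCoeff a n‖ = ‖(ofScalars 𝕜 a).derivSeries.coeff n 1‖ := by
        rw [derivSeries_coeff_one, coeff_ofScalars, nsmul_eq_mul, derivCoeff]; push_cast; rfl
    _ ≤ ‖(ofScalars 𝕜 a).derivSeries.coeff n‖ := by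
        simpa using ((ofScalars 𝕜 a).derivSeries.coeff n).le_opNorm 1

theorem radius_ofScalars_le_radius_derivCoeff (a : ℕ → 𝕜) :
    (ofScalars 𝕜 a).radius ≤ (ofScalars 𝕜 (derivCoeff a)).radius :=
  (radius_le_radius_derivSeries _).trans
    (radius_le_radius_of_norm_le (norm_ofScalars_derivCoeff_le a))

variable [CompleteSpace 𝕜]

theorem hasSum_ofScalarsSum {a : ℕ → 𝕜} {t : 𝕜} (ht : ‖t‖ₑ < (ofScalars 𝕜 a).radius) :
    HasSum (fun k => a k * t ^ k) (ofScalarsSum a t) := by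
  have h := (ofScalars 𝕜 a).hasSum (x := t) (by simpa using ht)
  simp only [ofScalars_apply_eq, smul_eq_mul] at h
  exact h

theorem hasDerivAt_ofScalarsSum {a : ℕ → 𝕜} {t : 𝕜} (ht : ‖t‖ₑ < (ofScalars 𝕜 a).radius) :
    HasDerivAt (ofScalarsSum a) (ofScalarsSum (derivCoeff a) t) t := by
  set p := ofScalars 𝕜 a
  change HasDerivAt p.sum _ t
  have hp : HasFPowerSeriesOnBall p.sum p 0 p.radius :=
    p.hasFPowerSeriesOnBall (bot_le.trans_lt ht)
  have ht' : t ∈ Metric.eball (0 : 𝕜) p.radius := by simpa using ht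
  have hdiff : HasDerivAt p.sum (deriv p.sum t) t :=
    ((hp.differentiableOn t ht').differentiableAt (Metric.isOpen_eball.mem_nhds ht')).hasDerivAt
  have hsum := (ContinuousLinearMap.apply 𝕜 𝕜 (1 : 𝕜)).hasSum (hp.fderiv.hasSum ht')
  simp only [zero_add, ContinuousLinearMap.apply_apply, fderiv_apply_one_eq_deriv,
    apply_eq_pow_smul_coeff] at hsum
  convert hdiff using 1
  rw [ofScalars_sum_eq]
  refine (hsum.congr_fun fun k => ?_).tsum_eq
  simp [p, derivCoeff, nsmul_eq_mul, mul_comm]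

theorem ofScalarsSum_hypergeometric_ode {a : ℕ → 𝕜} {α β γ t : 𝕜}
    (hrec : ∀ k : ℕ, (k + 1) * (γ + k) * a (k + 1) = (α + k) * (β + k) * a k)
    (ht : ‖t‖ₑ < (ofScalars 𝕜 a).radius) :
    t * (1 - t) * ofScalarsSum (derivCoeff (derivCoeff a)) t
      + (γ - (α + β + 1) * t) * ofScalarsSum (derivCoeff a) t - α * β * ofScalarsSum a t = 0 := by
  have ht' := ht.trans_le (radius_ofScalars_le_radius_derivCoeff a)
  have hA := hasSum_ofScalarsSum ht
  have hB := hasSum_ofScalarsSum ht'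
  have hC := hasSum_ofScalarsSum (ht'.trans_le (radius_ofScalars_le_radius_derivCoeff _))
  have htB := hasSum_mul_pow_of_hasSum_succ (b := fun k => k * a k)
    (by simpa [derivCoeff] using hB)
  have htC := hasSum_mul_pow_of_hasSum_succ (b := fun k => k * derivCoeff a k)
    (by simpa [derivCoeff] using hC)
  have httC := hasSum_mul_pow_of_hasSum_succ (b := fun k => k * (k - 1) * a k)
    (by convert htC using 2 with k; simp [derivCoeff]; ring)
  have hsum := (((htC.sub httC).add (hB.mul_left γ)).sub (htB.mul_left (α + β + 1))).sub
    (hA.mul_left (α * β))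
  have hzero : ∀ k : ℕ, k * derivCoeff a k * t ^ k - k * (k - 1) * a k * t ^ k
      + γ * (derivCoeff a k * t ^ k) - (α + β + 1) * (k * a k * t ^ k) - α * β * (a k * t ^ k)
      = 0 := fun k => by
    rw [derivCoeff]; linear_combination t ^ k * hrec k
  simp only [hzero, Nat.cast_zero, zero_mul, zero_add] at hsum
  linear_combination hsum.unique hasSum_zero

end FormalMultilinearSeries

section Hypergeometric

variable {𝕂 : Type*} [RCLike 𝕂]

theorem one_le_radius_ordinaryHypergeometricSeries (𝔸 : Type*) [NormedDivisionRing 𝔸]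
    [NormedAlgebra 𝕂 𝔸] (a b c : 𝕂) :
    1 ≤ (ordinaryHypergeometricSeries 𝔸 a b c).radius := by
  by_cases h : ∀ k : ℕ, (k : 𝕂) ≠ -a ∧ (k : 𝕂) ≠ -b ∧ (k : 𝕂) ≠ -c
  · exact (ordinaryHypergeometricSeries_radius_eq_one 𝔸 a b c h).ge
  simp only [not_forall, not_and_or, not_not] at h
  obtain ⟨k, hk | hk | hk⟩ := h
  · rw [show a = -k by rw [hk, neg_neg], ordinaryHypergeometric_radius_top_of_neg_nat₁]
    exact le_top
  · rw [show b = -k by rw [hk, neg_neg], ordinaryHypergeometric_radius_top_of_neg_nat₂]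
    exact le_top
  · rw [show c = -k by rw [hk, neg_neg], ordinaryHypergeometric_radius_top_of_neg_nat₃]
    exact le_top

theorem ordinaryHypergeometricCoefficient_succ {a b c : 𝕂} (hc : ∀ k : ℕ, c ≠ -k) (k : ℕ) :
    (k + 1) * (c + k) * ordinaryHypergeometricCoefficient a b c (k + 1)
      = (a + k) * (b + k) * ordinaryHypergeometricCoefficient a b c k := by
  have hck : c + k ≠ 0 := fun h => hc k (eq_neg_of_add_eq_zero_left h)
  have hpoch : (ascPochhammer 𝕂 k).eval c ≠ 0 := by
    rw [Ne, ascPochhammer_eval_eq_zero_iff]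
    rintro ⟨j, -, hj⟩
    exact hc j (by rw [hj, neg_neg])
  simp only [ordinaryHypergeometricCoefficient, ascPochhammer_succ_eval, Nat.factorial_succ]
  push_cast
  field_simp

theorem enorm_lt_radius_ordinaryHypergeometricSeries (a b c : 𝕂) {t : 𝕂} (ht : ‖t‖ < 1) :
    ‖t‖ₑ < (ordinaryHypergeometricSeries 𝕂 a b c).radius :=
  (by rw [← ofReal_norm]; exact ENNReal.ofReal_lt_one.mpr ht : ‖t‖ₑ < 1).trans_le
    (one_le_radius_ordinaryHypergeometricSeries 𝕂 a b c)

theorem analyticOnNhd_ordinaryHypergeometric (a b c : 𝕂) :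
    AnalyticOnNhd 𝕂 (ordinaryHypergeometric (𝔸 := 𝕂) a b c) (Metric.ball 0 1) :=
  have h := one_le_radius_ordinaryHypergeometricSeries 𝕂 a b c
  ((ordinaryHypergeometricSeries 𝕂 a b c).hasFPowerSeriesOnBall
    (zero_lt_one.trans_le h)).analyticOnNhd.mono
    fun _ hs => Metric.eball_subset_eball h (by rwa [← ENNReal.ofReal_one, Metric.eball_ofReal])

theorem ordinaryHypergeometric_ode (a b : 𝕂) {c : 𝕂} (hc : ∀ k : ℕ, c ≠ -k) {t : 𝕂}
    (ht : ‖t‖ < 1) :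
    t * (1 - t) * deriv (deriv (ordinaryHypergeometric a b c)) t
      + (c - (a + b + 1) * t) * deriv (ordinaryHypergeometric a b c) t
      - a * b * ordinaryHypergeometric a b c t = 0 := by
  have hF : ∀ᶠ s in 𝓝 t, HasDerivAt (ordinaryHypergeometric a b c)
      (ofScalarsSum (derivCoeff (ordinaryHypergeometricCoefficient a b c)) s) s := by
    filter_upwards [Metric.isOpen_ball.mem_nhds (by simpa using ht : t ∈ Metric.ball (0 : 𝕂) 1)]
      with s hs
    exact hasDerivAt_ofScalarsSum
      (enorm_lt_radius_ordinaryHypergeometricSeries a b c (by simpa using hs))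
  have hF' := hasDerivAt_ofScalarsSum
    ((enorm_lt_radius_ordinaryHypergeometricSeries a b c ht).trans_le
      (radius_ofScalars_le_radius_derivCoeff _))
  rw [deriv_deriv_eq_of_eventually_hasDerivAt hF hF', hF.self_of_nhds.deriv]
  exact ofScalarsSum_hypergeometric_ode (ordinaryHypergeometricCoefficient_succ hc)
    (enorm_lt_radius_ordinaryHypergeometricSeries a b c ht)

end Hypergeometric

theorem poch_eq_ascPochhammer_eval (a : ℂ) (k : ℕ) : poch a k = (ascPochhammer ℂ k).eval a := by
  induction k with
  | zero => simp [poch]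
  | succ k ih => rw [poch, Finset.prod_range_succ, ← poch, ih, ascPochhammer_succ_eval]

theorem F2F1_eq_ordinaryHypergeometric (a b c t : ℂ) : F2F1 a b c t = ₂F₁ a b c t := by
  simp only [F2F1, ordinaryHypergeometric_eq_tsum, poch_eq_ascPochhammer_eval, smul_eq_mul]
  congr 1 with k
  ring

theorem hasDerivAt_one_sub_cpow (μ : ℂ) {t : ℂ} (ht : ‖t‖ < 1) :
    HasDerivAt (fun s : ℂ => (1 - s) ^ μ) (-μ * (1 - t) ^ (μ - 1)) t := by
  have h1t : 1 - t ∈ slitPlane := by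
    simpa [sub_eq_add_neg] using mem_slitPlane_of_norm_lt_one (z := -t) (by simpa using ht)
  convert ((hasDerivAt_id' t).const_sub 1).cpow_const (c := μ) h1t using 1
  ring

theorem one_sub_cpow_mul_ode {μ c : ℂ} {F : ℂ → ℂ} (hF : AnalyticOnNhd ℂ F (Metric.ball 0 1))
    {t : ℂ} (ht : ‖t‖ < 1)
    (hode : t * (1 - t) * deriv (deriv F) t + (c - (2 * μ + c) * t) * deriv F t
      - μ * (μ + c - 1) * F t = 0) :
    (1 - t) ^ 2 * (t * deriv (deriv fun s => (1 - s) ^ μ * F s) t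
      + c * deriv (fun s => (1 - s) ^ μ * F s) t) = μ * (μ - 1) * ((1 - t) ^ μ * F t) := by
  have ht' : t ∈ Metric.ball (0 : ℂ) 1 := by simpa using ht
  have hy' : ∀ᶠ s in 𝓝 t, HasDerivAt (fun s => (1 - s) ^ μ * F s)
      (-μ * (1 - s) ^ (μ - 1) * F s + (1 - s) ^ μ * deriv F s) s := by
    filter_upwards [Metric.isOpen_ball.mem_nhds ht'] with s hs
    exact (hasDerivAt_one_sub_cpow μ (by simpa using hs)).mul (hF s hs).differentiableAt.hasDerivAt
  have hy'' := (((hasDerivAt_one_sub_cpow (μ - 1) ht).const_mul (-μ)).mul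
    (hF t ht').differentiableAt.hasDerivAt).add
    ((hasDerivAt_one_sub_cpow μ ht).mul (hF.deriv t ht').differentiableAt.hasDerivAt)
  have hne : 1 - t ≠ 0 := sub_ne_zero.mpr fun h => by simp [← h] at ht
  have hpow : ∀ ν : ℂ, (1 - t) ^ ν = (1 - t) ^ (ν - 1) * (1 - t) := fun ν => by
    conv_lhs => rw [← sub_add_cancel ν 1]
    rw [cpow_add _ _ hne, cpow_one]
  rw [deriv_deriv_eq_of_eventually_hasDerivAt hy' hy'', hy'.self_of_nhds.deriv, hpow μ,
    hpow (μ - 1)]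
  linear_combination (1 - t) ^ 3 * (1 - t) ^ (μ - 1 - 1) * hode

theorem stmt0 (μ : ℂ) (n : ℕ) (y : ℂ → ℂ)
    (hy : y = fun t => (1 - t) ^ μ * F2F1 μ (μ + n) (n + 1) t) :
    ∀ t : ℂ, ‖t‖ < 1 →
      4 * (1 - t) ^ 2 * (t * deriv (deriv y) t + ((n : ℂ) + 1) * deriv y t)
        = 4 * μ * (μ - 1) * y t := by
  intro t ht
  have hyF : y = fun s => (1 - s) ^ μ * ₂F₁ μ (μ + n) (n + 1) s := by
    rw [hy]; funext s; rw [F2F1_eq_ordinaryHypergeometric]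
  have hc : ∀ k : ℕ, (n : ℂ) + 1 ≠ -k := fun k h => by
    have : ((n + 1 + k : ℕ) : ℂ) = 0 := by push_cast; linear_combination h
    exact absurd (Nat.cast_eq_zero.mp this) (by omega)
  have hode := ordinaryHypergeometric_ode μ (μ + n) hc ht
  have hy := one_sub_cpow_mul_ode (μ := μ) (c := n + 1)
    (analyticOnNhd_ordinaryHypergeometric _ _ _) ht
    (by linear_combination hode)
  rw [hyF]
  linear_combination 4 * hy
end

section
/- Let m ∈ ℕ₀ and n ∈ ℤ with |n| ≤ m. The function P_n^{-m}(z,w) = (-1)^n ∑_{k=0}^{m-|n|} binom(m, k+|n|) binom(m, k) z^{k+max(-n,0)} w^{k+max(n,0)} / (1-zw)^m is holomorphic on {(z,w) ∈ ℂ² : zw ≠ 1} and satisfies 4(1-zw)² ∂_z ∂_w P_n^{-m} = 4m(m+1) P_n^{-m} there. -/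
open Complex

/-- Exceptional Poisson Fourier mode `P_n^{-m}` for `|n| ≤ m`. -/
noncomputable def PFM (m : ℕ) (n : ℤ) (z w : ℂ) : ℂ :=
  (-1 : ℂ) ^ n * (∑ k ∈ Finset.range (m - n.natAbs + 1),
      (Nat.choose m (k + n.natAbs) : ℂ) * (Nat.choose m k : ℂ) *
        z ^ (k + (max (-n) 0).toNat) * w ^ (k + (max n 0).toNat)) / (1 - z * w) ^ m

/-!
Write `P_n^{-m} = S · (1 - zw)^{-m}` with `S(z,w) = ∑ C_k z^{k+p} w^{k+q}`, where
`p = max(-n,0)`, `q = max(n,0)`, so `pq = 0`. Differentiating twice shows that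
`(1 - zw)² ∂_z ∂_w (S (1 - zw)^{-m}) = m(m+1) S (1 - zw)^{-m}` as soon as `S` solves
`(1 - zw) S_zw + m z S_z + m w S_w = m² S`. For the diagonal sum `S` this equation becomes, after
shifting the summation index in `S_zw`, the two-term recurrence
`C_{k+1} (k+1)(k+1+|n|) = C_k (m-k)(m-k-|n|)`, which is the product of the relations
`binom(m, j+1) (j+1) = binom(m, j) (m-j)` for `j = k` and `j = k + |n|`.
-/

open Finset

theorem Nat.cast_choose_succ_mul {R : Type*} [CommRing R] (n k : ℕ) :
    (n.choose (k + 1) : R) * (k + 1) = n.choose k * (n - k) := by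
  rcases le_or_gt k n with hk | hk
  · exact_mod_cast congrArg (Nat.cast : ℕ → R) (Nat.choose_succ_right_eq n k) |>.trans
      (by push_cast [Nat.cast_sub hk]; ring)
  · simp [Nat.choose_eq_zero_of_lt hk, Nat.choose_eq_zero_of_lt (Nat.lt_succ_of_lt hk)]

theorem mul_natCast_mul_pow_sub_one {R : Type*} [CommSemiring R] (x : R) (n : ℕ) :
    x * (n * x ^ (n - 1)) = n * x ^ n := by
  cases n with
  | zero => simp
  | succ n => simp only [Nat.add_sub_cancel, pow_succ]; ring

section DiagSum

variable {R : Type*} [CommRing R] (C : ℕ → R) (N p q : ℕ)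

def diagSum (z w : R) : R := ∑ k ∈ range N, C k * z ^ (k + p) * w ^ (k + q)

def diagSumDz (z w : R) : R :=
  ∑ k ∈ range N, C k * ((k + p : ℕ) * z ^ (k + p - 1)) * w ^ (k + q)

def diagSumDw (z w : R) : R :=
  ∑ k ∈ range N, C k * z ^ (k + p) * ((k + q : ℕ) * w ^ (k + q - 1))

def diagSumDzDw (z w : R) : R :=
  ∑ k ∈ range N, C k * ((k + p : ℕ) * z ^ (k + p - 1)) * ((k + q : ℕ) * w ^ (k + q - 1))

theorem diagSum_pde (s : R) (hpq : p * q = 0) (hN : C N = 0)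
    (hrec : ∀ k : ℕ, C (k + 1) * (((k : R) + 1 + p) * ((k : R) + 1 + q))
      = C k * ((s - k - p) * (s - k - q))) (z w : R) :
    (1 - z * w) * diagSumDzDw C N p q z w + s * z * diagSumDz C N p q z w
      + s * w * diagSumDw C N p q z w = s ^ 2 * diagSum C N p q z w := by
  set mono : ℕ → R := fun k => z ^ (k + p) * w ^ (k + q) with hmono
  have hz : z * diagSumDz C N p q z w = ∑ k ∈ range N, C k * (k + p : ℕ) * mono k := by
    rw [diagSumDz, mul_sum]
    refine sum_congr rfl fun k _ => ?_
    linear_combination C k * w ^ (k + q) * mul_natCast_mul_pow_sub_one z (k + p)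
  have hw : w * diagSumDw C N p q z w = ∑ k ∈ range N, C k * (k + q : ℕ) * mono k := by
    rw [diagSumDw, mul_sum]
    refine sum_congr rfl fun k _ => ?_
    linear_combination C k * z ^ (k + p) * mul_natCast_mul_pow_sub_one w (k + q)
  have hzw : z * w * diagSumDzDw C N p q z w
      = ∑ k ∈ range N, C k * ((k + p : ℕ) * (k + q : ℕ)) * mono k := by
    rw [diagSumDzDw, mul_sum]
    refine sum_congr rfl fun k _ => ?_
    linear_combination C k * ((k + q : ℕ) * w ^ (k + q - 1)) * w
        * mul_natCast_mul_pow_sub_one z (k + p)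
      + C k * (k + p : ℕ) * z ^ (k + p) * mul_natCast_mul_pow_sub_one w (k + q)
  -- index shift: the `k = 0` term vanishes because `p * q = 0`, the new last term because `C N = 0`
  have hshift : diagSumDzDw C N p q z w
      = ∑ k ∈ range N, C (k + 1) * (((k : R) + 1 + p) * ((k : R) + 1 + q)) * mono k := by
    set f : ℕ → R := fun k =>
      C k * ((k + p : ℕ) * z ^ (k + p - 1)) * ((k + q : ℕ) * w ^ (k + q - 1)) with hf
    have hlast : f N = 0 := by simp [hf, hN]
    have hfirst : f 0 = 0 := by
      rcases Nat.mul_eq_zero.mp hpq with h | h <;> simp [hf, h]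
    rw [diagSumDzDw, ← add_zero (∑ k ∈ range N, f k), ← hlast, ← sum_range_succ,
      sum_range_succ', hfirst, add_zero]
    refine sum_congr rfl fun k _ => ?_
    rw [hf, hmono]
    simp only [show k + 1 + p - 1 = k + p by omega, show k + 1 + q - 1 = k + q by omega]
    push_cast
    ring
  calc (1 - z * w) * diagSumDzDw C N p q z w + s * z * diagSumDz C N p q z w
        + s * w * diagSumDw C N p q z w
      = diagSumDzDw C N p q z w - z * w * diagSumDzDw C N p q z w
        + s * (z * diagSumDz C N p q z w) + s * (w * diagSumDw C N p q z w) := by ring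
    _ = ∑ k ∈ range N, s ^ 2 * (C k * mono k) := by
      rw [hzw, hshift, hz, hw, mul_sum, mul_sum, ← sum_sub_distrib, ← sum_add_distrib,
        ← sum_add_distrib]
      refine sum_congr rfl fun k _ => ?_
      push_cast
      linear_combination mono k * hrec k
    _ = s ^ 2 * diagSum C N p q z w := by
      rw [diagSum, mul_sum]
      simp only [hmono, mul_assoc]

end DiagSum

section Derivatives

variable {𝕜 : Type*} [NontriviallyNormedField 𝕜]

section DiagSumDerivatives

variable (C : ℕ → 𝕜) (N p q : ℕ) (z w : 𝕜)

theorem hasDerivAt_diagSum_right :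
    HasDerivAt (diagSum C N p q z) (diagSumDw C N p q z w) w :=
  HasDerivAt.fun_sum fun k _ => (hasDerivAt_pow (k + q) w).const_mul (C k * z ^ (k + p))

theorem hasDerivAt_diagSum_left :
    HasDerivAt (diagSum C N p q · w) (diagSumDz C N p q z w) z :=
  HasDerivAt.fun_sum fun k _ =>
    ((hasDerivAt_pow (k + p) z).const_mul (C k)).mul_const (w ^ (k + q))

theorem hasDerivAt_diagSumDw_left :
    HasDerivAt (diagSumDw C N p q · w) (diagSumDzDw C N p q z w) z :=
  HasDerivAt.fun_sum fun k _ =>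
    ((hasDerivAt_pow (k + p) z).const_mul (C k)).mul_const ((k + q : ℕ) * w ^ (k + q - 1))

end DiagSumDerivatives

theorem hasDerivAt_one_sub_mul_zpow_left (e : ℤ) {z w : 𝕜} (hzw : z * w ≠ 1) :
    HasDerivAt (fun z' => (1 - z' * w) ^ e) (e * (1 - z * w) ^ (e - 1) * -w) z := by
  have h : HasDerivAt (fun z' : 𝕜 => 1 - z' * w) (-w) z := by
    simpa using ((hasDerivAt_id z).mul_const w).const_sub 1
  exact (hasDerivAt_zpow e _ (Or.inl (sub_ne_zero.mpr hzw.symm))).comp z h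

theorem hasDerivAt_one_sub_mul_zpow_right (e : ℤ) {z w : 𝕜} (hzw : z * w ≠ 1) :
    HasDerivAt (fun w' => (1 - z * w') ^ e) (e * (1 - z * w) ^ (e - 1) * -z) w := by
  have h : HasDerivAt (fun w' : 𝕜 => 1 - z * w') (-z) w := by
    simpa using ((hasDerivAt_id w).const_mul z).const_sub 1
  exact (hasDerivAt_zpow e _ (Or.inl (sub_ne_zero.mpr hzw.symm))).comp w h

theorem deriv_deriv_mul_one_sub_mul_zpow {S Sz Sw Szw : 𝕜 → 𝕜 → 𝕜} (m : ℤ)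
    (hSw : ∀ z w, HasDerivAt (S z) (Sw z w) w) (hSz : ∀ z w, HasDerivAt (S · w) (Sz z w) z)
    (hSzw : ∀ z w, HasDerivAt (Sw · w) (Szw z w) z) {z w : 𝕜} (hzw : z * w ≠ 1)
    (hpde : (1 - z * w) * Szw z w + m * z * Sz z w + m * w * Sw z w = m ^ 2 * S z w) :
    (1 - z * w) ^ 2 * deriv (fun z' => deriv (fun w' => S z' w' * (1 - z' * w') ^ (-m)) w) z
      = m * (m + 1) * (S z w * (1 - z * w) ^ (-m)) := by
  have hinner : (fun z' => deriv (fun w' => S z' w' * (1 - z' * w') ^ (-m)) w)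
      =ᶠ[nhds z] fun z' =>
        Sw z' w * (1 - z' * w) ^ (-m) + m * z' * S z' w * (1 - z' * w) ^ (-m - 1) := by
    have hopen : IsOpen {z' : 𝕜 | z' * w ≠ 1} := isOpen_ne_fun (by fun_prop) (by fun_prop)
    filter_upwards [hopen.mem_nhds hzw] with z' hz'
    rw [((hSw z' w).fun_mul (hasDerivAt_one_sub_mul_zpow_right (-m) hz')).deriv]
    push_cast
    ring
  have houter := ((hSzw z w).fun_mul (hasDerivAt_one_sub_mul_zpow_left (-m) hzw)).fun_add
    ((((hasDerivAt_id' z).const_mul (m : 𝕜)).fun_mul (hSz z w)).fun_mul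
      (hasDerivAt_one_sub_mul_zpow_left (-m - 1) hzw))
  rw [hinner.deriv_eq, houter.deriv]
  have hD : 1 - z * w ≠ 0 := sub_ne_zero.mpr hzw.symm
  set u := (1 - z * w) ^ (-m - 2)
  have hu₁ : (1 - z * w) ^ (-m - 1) = u * (1 - z * w) := by rw [← zpow_add_one₀ hD]; ring_nf
  have hu₀ : (1 - z * w) ^ (-m) = u * (1 - z * w) ^ 2 := by
    rw [← zpow_natCast, ← zpow_add₀ hD]; ring_nf
  rw [show -m - 1 - 1 = -m - 2 by ring, hu₁, hu₀]
  push_cast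
  linear_combination u * (1 - z * w) ^ 3 * hpde

end Derivatives

theorem toNat_max_neg_mul_toNat_max (n : ℤ) : (max (-n) 0).toNat * (max n 0).toNat = 0 := by
  rcases le_total n 0 with h | h
  · simp [max_eq_right h]
  · simp [max_eq_right (neg_nonpos.mpr h)]

noncomputable def pfmCoeff (m : ℕ) (n : ℤ) (k : ℕ) : ℂ :=
  (-1) ^ n * (m.choose (k + n.natAbs) * m.choose k)

theorem pfmCoeff_succ (m : ℕ) (n : ℤ) (k : ℕ) :
    pfmCoeff m n (k + 1) * (((k : ℂ) + 1 + (max (-n) 0).toNat) * ((k : ℂ) + 1 + (max n 0).toNat))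
      = pfmCoeff m n k * ((m - k - (max (-n) 0).toNat) * (m - k - (max n 0).toNat)) := by
  set p := (max (-n) 0).toNat
  set q := (max n 0).toNat
  have hsum : (p : ℂ) + q = n.natAbs := by norm_cast; omega
  have hprod : (p : ℂ) * q = 0 := by exact_mod_cast toNat_max_neg_mul_toNat_max n
  have h₁ := Nat.cast_choose_succ_mul (R := ℂ) m k
  have h₂ := Nat.cast_choose_succ_mul (R := ℂ) m (k + n.natAbs)
  rw [pfmCoeff, pfmCoeff, add_right_comm k 1]
  push_cast at h₂ ⊢
  linear_combination (-1 : ℂ) ^ n * ((m.choose (k + 1) * (k + 1) * h₂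
    + m.choose (k + n.natAbs) * (m - (k + n.natAbs)) * h₁)
    + (m.choose (k + n.natAbs + 1) * m.choose (k + 1) * (k + 1)
      + m.choose (k + n.natAbs) * m.choose k * (m - k)) * hsum
    + (m.choose (k + n.natAbs + 1) * m.choose (k + 1) - m.choose (k + n.natAbs) * m.choose k)
      * hprod)

theorem PFM_eq_diagSum_mul_zpow (m : ℕ) (n : ℤ) (z w : ℂ) :
    PFM m n z w = diagSum (pfmCoeff m n) (m - n.natAbs + 1) (max (-n) 0).toNat (max n 0).toNat
      z w * (1 - z * w) ^ (-(m : ℤ)) := by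
  simp only [PFM, diagSum, pfmCoeff, mul_sum, zpow_neg, zpow_natCast, div_eq_mul_inv, mul_assoc]

theorem differentiableOn_PFM (m : ℕ) (n : ℤ) :
    DifferentiableOn ℂ (fun p : ℂ × ℂ => PFM m n p.1 p.2) {p : ℂ × ℂ | p.1 * p.2 ≠ 1} := by
  intro x hx
  unfold PFM
  exact DifferentiableAt.differentiableWithinAt
    (by fun_prop (disch := exact pow_ne_zero _ (sub_ne_zero.mpr (Ne.symm hx))))

theorem stmt6_general (m : ℕ) (n : ℤ) :
    DifferentiableOn ℂ (fun p : ℂ × ℂ => PFM m n p.1 p.2) {p : ℂ × ℂ | p.1 * p.2 ≠ 1}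
    ∧ ∀ z w : ℂ, z * w ≠ 1 →
        4 * (1 - z * w) ^ 2 * deriv (fun z' => deriv (fun w' => PFM m n z' w') w) z
          = 4 * (m : ℂ) * ((m : ℂ) + 1) * PFM m n z w := by
  refine ⟨differentiableOn_PFM m n, fun z w hzw => ?_⟩
  have hN : pfmCoeff m n (m - n.natAbs + 1) = 0 := by
    simp [pfmCoeff, Nat.choose_eq_zero_of_lt (show m < m - n.natAbs + 1 + n.natAbs by omega)]
  have hpde :=
    diagSum_pde _ _ _ _ (m : ℂ) (toNat_max_neg_mul_toNat_max n) hN (pfmCoeff_succ m n) z w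
  have key := deriv_deriv_mul_one_sub_mul_zpow (m : ℤ) (hasDerivAt_diagSum_right _ _ _ _)
    (hasDerivAt_diagSum_left _ _ _ _) (hasDerivAt_diagSumDw_left _ _ _ _) hzw
    (by exact_mod_cast hpde)
  simp only [PFM_eq_diagSum_mul_zpow]
  push_cast at key
  linear_combination 4 * key

/-- `P_n^{-m}` is holomorphic on `{zw ≠ 1}` and is an eigenfunction of the
invariant Laplacian `Δ_{zw} = 4(1-zw)² ∂_z ∂_w` with eigenvalue `4m(m+1)`. -/
theorem stmt6 (m : ℕ) (n : ℤ) (hn : n.natAbs ≤ m) :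
    DifferentiableOn ℂ (fun p : ℂ × ℂ => PFM m n p.1 p.2) {p : ℂ × ℂ | p.1 * p.2 ≠ 1}
    ∧ ∀ z w : ℂ, z * w ≠ 1 →
        4 * (1 - z * w) ^ 2 * deriv (fun z' => deriv (fun w' => PFM m n z' w') w) z
          = 4 * (m : ℂ) * ((m : ℂ) + 1) * PFM m n z w :=
  stmt6_general m n
end

section
/- The operators D⁺ = ∂_z - w²∂_w and D⁻ = ∂_w - z²∂_z commute with the invariant Laplacian Δ_{zw} = 4(1-zw)²∂_z∂_w on holomorphic functions: for every holomorphic f on an open subset of ℂ², D⁺(Δ_{zw} f) = Δ_{zw}(D⁺ f) and D⁻(Δ_{zw} f) = Δ_{zw}(D⁻ f). -/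
/-!
Everything reduces to the fact that the partial derivatives of a holomorphic function on an open
subset of `ℂ²` are again holomorphic, so that mixed partials commute. For `∂_w f` this comes from
Cauchy's formula on a circle of fixed radius around `w`: it writes `∂_w f` near a point as an
integral of translates of `f`, which may be differentiated under the integral sign because, by the
Schwarz lemma, `f` has locally bounded derivative. With mixed partials commuting, a direct
computation gives `[∂_z ∂_w, D⁺] = -2w ∂_z ∂_w` and `D⁺ (1 - zw)² = -2w (1 - zw)²`, and the two
error terms cancel in `D⁺ (4(1 - zw)² ∂_z ∂_w f)`. The case of `D⁻` is symmetric.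
-/

open Complex

/-- Partial complex derivative in the first variable. -/
noncomputable def pz (f : ℂ × ℂ → ℂ) (p : ℂ × ℂ) : ℂ := deriv (fun z => f (z, p.2)) p.1

/-- Partial complex derivative in the second variable. -/
noncomputable def pw (f : ℂ × ℂ → ℂ) (p : ℂ × ℂ) : ℂ := deriv (fun w => f (p.1, w)) p.2

/-- The operator `D⁺ = ∂_z - w² ∂_w`. -/
noncomputable def Dplus (f : ℂ × ℂ → ℂ) (p : ℂ × ℂ) : ℂ := pz f p - p.2 ^ 2 * pw f p

/-- The operator `D⁻ = ∂_w - z² ∂_z`. -/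
noncomputable def Dminus (f : ℂ × ℂ → ℂ) (p : ℂ × ℂ) : ℂ := pw f p - p.1 ^ 2 * pz f p

/-- The invariant Laplacian `Δ_{zw} = 4(1-zw)² ∂_z ∂_w`. -/
noncomputable def InvLap (f : ℂ × ℂ → ℂ) (p : ℂ × ℂ) : ℂ :=
  4 * (1 - p.1 * p.2) ^ 2 * deriv (fun z => deriv (fun w => f (z, w)) p.2) p.1

open Metric Set Filter MeasureTheory
open scoped Topology Real

theorem exists_ball_subset_norm_fderiv_le {E F : Type*} [NormedAddCommGroup E]
    [NormedSpace ℂ E] [NormedAddCommGroup F] [NormedSpace ℂ F] {f : E → F} {s : Set E} {x : E}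
    (hf : DifferentiableOn ℂ f s) (hs : IsOpen s) (hx : x ∈ s) :
    ∃ ε > 0, ball x ε ⊆ s ∧ ∃ C, ∀ y ∈ ball x ε, ‖fderiv ℂ f y‖ ≤ C := by
  have hnhds : s ∩ {y | dist (f y) (f x) < 1} ∈ 𝓝 x :=
    inter_mem (hs.mem_nhds hx) ((hf.continuousOn.continuousAt (hs.mem_nhds hx)).eventually
      (ball_mem_nhds (f x) one_pos))
  obtain ⟨δ, hδ, hδs⟩ := Metric.mem_nhds_iff.1 hnhds
  have hhalf : ball x (δ / 2) ⊆ ball x δ := ball_subset_ball (half_le_self hδ.le)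
  refine ⟨δ / 2, half_pos hδ, hhalf.trans fun y hy => (hδs hy).1, 2 / (δ / 2), fun y hy => ?_⟩
  have hball : ball y (δ / 2) ⊆ ball x δ := ball_subset_ball' (by linarith [mem_ball.1 hy])
  refine Complex.norm_fderiv_le_div_of_mapsTo_ball (hf.mono fun z hz => (hδs (hball hz)).1)
    (fun z hz => ?_) (half_pos hδ)
  have hz : dist (f z) (f x) < 1 := (hδs (hball hz)).2
  have hy : dist (f y) (f x) < 1 := (hδs (hhalf hy)).2
  rw [mem_closedBall]
  linarith [dist_triangle_right (f z) (f y) (f x)]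

theorem differentiableAt_intervalIntegral_smul_comp_add {𝕜 H E : Type*} [RCLike 𝕜]
    [NormedAddCommGroup H] [NormedSpace 𝕜 H] [FiniteDimensional 𝕜 H] [NormedAddCommGroup E]
    [NormedSpace 𝕜 E] [NormedSpace ℝ E] [CompleteSpace E] [SecondCountableTopology E]
    {f : H → E} {c : ℝ → 𝕜} {v : ℝ → H} {a b C : ℝ} {s : Set H} {x₀ : H}
    (hc : Continuous c) (hv : Continuous v) (hs : s ∈ 𝓝 x₀)
    (hf : ∀ x ∈ s, ∀ θ, DifferentiableAt 𝕜 f (x + v θ))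
    (hC : ∀ x ∈ s, ∀ θ, ‖fderiv 𝕜 f (x + v θ)‖ ≤ C) :
    DifferentiableAt 𝕜 (fun x => ∫ θ in a..b, c θ • f (x + v θ)) x₀ := by
  borelize H
  have hcont : ∀ x ∈ s, Continuous fun θ => c θ • f (x + v θ) := fun x hx =>
    hc.smul (continuous_iff_continuousAt.2 fun θ =>
      (hf x hx θ).continuousAt.comp (x := θ) (by fun_prop))
  refine (intervalIntegral.hasFDerivAt_integral_of_dominated_of_fderiv_le
    (F' := fun x θ => c θ • fderiv 𝕜 f (x + v θ)) (bound := fun θ => ‖c θ‖ * C)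
    hs ?_ ?_ ?_ ?_ ?_ ?_).differentiableAt
  · filter_upwards [hs] with x hx using (hcont x hx).aestronglyMeasurable
  · exact (hcont x₀ (mem_of_mem_nhds hs)).intervalIntegrable _ _
  · exact (hc.measurable.smul ((measurable_fderiv 𝕜 f).comp
      (continuous_const.add hv).measurable)).aestronglyMeasurable
  · refine ae_of_all _ fun θ _ x hx => ?_
    rw [norm_smul]
    exact mul_le_mul_of_nonneg_left (hC x hx θ) (norm_nonneg _)
  · exact (hc.norm.mul continuous_const).intervalIntegrable _ _
  · exact ae_of_all _ fun θ _ x hx =>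
      ((hf x hx θ).hasFDerivAt.comp x ((hasFDerivAt_id x).add_const (v θ))).const_smul (c θ)

section PartialDerivatives

variable {f g : ℂ × ℂ → ℂ} {p : ℂ × ℂ} {U : Set (ℂ × ℂ)}

theorem DifferentiableAt.hasDerivAt_pz (hf : DifferentiableAt ℂ f p) :
    HasDerivAt (fun z => f (z, p.2)) (pz f p) p.1 :=
  (hf.comp p.1 (differentiableAt_id.prodMk (differentiableAt_const _))).hasDerivAt

theorem DifferentiableAt.hasDerivAt_pw (hf : DifferentiableAt ℂ f p) :
    HasDerivAt (fun w => f (p.1, w)) (pw f p) p.2 :=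
  (hf.comp p.2 ((differentiableAt_const _).prodMk differentiableAt_id)).hasDerivAt

theorem DifferentiableAt.pz_eq_fderiv (hf : DifferentiableAt ℂ f p) :
    pz f p = fderiv ℂ f p (1, 0) :=
  hf.hasDerivAt_pz.unique (hf.hasFDerivAt.comp_hasDerivAt p.1
    ((hasDerivAt_id p.1).prodMk (hasDerivAt_const p.1 p.2)))

theorem DifferentiableAt.pw_eq_fderiv (hf : DifferentiableAt ℂ f p) :
    pw f p = fderiv ℂ f p (0, 1) :=
  hf.hasDerivAt_pw.unique (hf.hasFDerivAt.comp_hasDerivAt p.2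
    ((hasDerivAt_const p.2 p.1).prodMk (hasDerivAt_id p.2)))

theorem DifferentiableAt.fderiv_eq_pz_smul_fst_add_pw_smul_snd (hf : DifferentiableAt ℂ f p) :
    fderiv ℂ f p =
      pz f p • ContinuousLinearMap.fst ℂ ℂ ℂ + pw f p • ContinuousLinearMap.snd ℂ ℂ ℂ := by
  ext <;> simp [hf.pz_eq_fderiv, hf.pw_eq_fderiv]

theorem Filter.EventuallyEq.pz_eq (h : f =ᶠ[𝓝 p] g) : pz f p = pz g p :=
  (h.comp_tendsto ((continuous_id.prodMk continuous_const).tendsto' p.1 p rfl)).deriv_eq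

theorem pz_mul (hf : DifferentiableAt ℂ f p) (hg : DifferentiableAt ℂ g p) :
    pz (fun q => f q * g q) p = pz f p * g p + f p * pz g p :=
  (hf.hasDerivAt_pz.mul hg.hasDerivAt_pz).deriv

theorem pw_mul (hf : DifferentiableAt ℂ f p) (hg : DifferentiableAt ℂ g p) :
    pw (fun q => f q * g q) p = pw f p * g p + f p * pw g p :=
  (hf.hasDerivAt_pw.mul hg.hasDerivAt_pw).deriv

theorem pw_eq_cderiv {r : ℝ} {x : ℂ × ℂ} (hf : DifferentiableOn ℂ f U) (hU : IsOpen U)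
    (hr : 0 < r) (hx : closedBall x r ⊆ U) :
    pw f x = cderiv r (fun w => f (x.1, w)) x.2 := by
  have hslice : MapsTo (fun w => (x.1, w)) (closedBall x.2 r) U := fun w hw => hx <| by
    rw [← closedBall_prod_same]
    exact ⟨mem_closedBall_self hr.le, hw⟩
  exact (cderiv_eq_deriv (hU.preimage (by fun_prop))
    (hf.comp ((differentiableOn_const _).prodMk differentiableOn_id) fun w hw => hw)
    hr hslice).symm

theorem differentiableAt_pw (hf : DifferentiableOn ℂ f U) (hU : IsOpen U) (hp : p ∈ U) :
    DifferentiableAt ℂ (pw f) p := by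
  obtain ⟨ε, hε, hεU, C, hC⟩ := exists_ball_subset_norm_fderiv_le hf hU hp
  set r := ε / 2 with hr_def
  have hr : 0 < r := half_pos hε
  set c : ℝ → ℂ := fun θ => circleMap 0 r θ * I * (circleMap 0 r θ ^ 2)⁻¹
  set v : ℝ → ℂ × ℂ := fun θ => (0, circleMap 0 r θ)
  have hv : ∀ x ∈ ball p r, ∀ θ, x + v θ ∈ ball p ε := fun x hx θ => by
    have hvθ : ‖v θ‖ = r := by simp [v, hr.le]
    rw [mem_ball] at hx ⊢
    linarith [dist_triangle (x + v θ) x p, dist_self_add_left (v θ) x]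
  have hrep : pw f =ᶠ[𝓝 p]
      fun x => (2 * π * I : ℂ)⁻¹ • ∫ θ in 0..2 * π, c θ • f (x + v θ) := by
    filter_upwards [ball_mem_nhds p hr] with x hx
    rw [pw_eq_cderiv (x := x) hf hU hr
      ((closedBall_subset_ball' (by linarith [mem_ball.1 hx])).trans hεU)]
    simp only [cderiv, circleIntegral, deriv_circleMap, circleMap_sub_center, smul_smul]
    congr 1
    refine intervalIntegral.integral_congr fun θ _ => ?_
    have : (x.1, circleMap x.2 r θ) = x + v θ := by ext <;> simp [v, circleMap]
    rw [this]
  have hc : Continuous c := ((continuous_circleMap 0 r).mul continuous_const).mul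
    (((continuous_circleMap 0 r).pow 2).inv₀ fun θ => pow_ne_zero 2 (circleMap_ne_center hr.ne'))
  refine DifferentiableAt.congr_of_eventuallyEq ?_ hrep
  exact (differentiableAt_intervalIntegral_smul_comp_add hc (by fun_prop) (ball_mem_nhds p hr)
    (fun x hx θ => (hf _ (hεU (hv x hx θ))).differentiableAt (hU.mem_nhds (hεU (hv x hx θ))))
    (fun x hx θ => hC _ (hv x hx θ))).fun_const_smul _

theorem differentiableOn_pw (hf : DifferentiableOn ℂ f U) (hU : IsOpen U) :
    DifferentiableOn ℂ (pw f) U :=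
  fun _ hp => (differentiableAt_pw hf hU hp).differentiableWithinAt

theorem differentiableOn_pz (hf : DifferentiableOn ℂ f U) (hU : IsOpen U) :
    DifferentiableOn ℂ (pz f) U := by
  have hswap : Differentiable ℂ (Prod.swap : ℂ × ℂ → ℂ × ℂ) :=
    differentiable_snd.prodMk differentiable_fst
  have hsw : DifferentiableOn ℂ (pw (f ∘ Prod.swap)) (Prod.swap ⁻¹' U) :=
    differentiableOn_pw (hf.comp hswap.differentiableOn fun _ h => h)
      (hU.preimage hswap.continuous)
  exact hsw.comp hswap.differentiableOn fun q hq => by simpa using hq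

theorem pz_pw_eq_pw_pz (hf : DifferentiableOn ℂ f U) (hU : IsOpen U) (hp : p ∈ U) :
    pz (pw f) p = pw (pz f) p := by
  have hz := (differentiableOn_pz hf hU).differentiableAt (hU.mem_nhds hp)
  have hw := (differentiableOn_pw hf hU).differentiableAt (hU.mem_nhds hp)
  have hf' : ∀ᶠ y in 𝓝 p, HasFDerivAt f
      (pz f y • ContinuousLinearMap.fst ℂ ℂ ℂ + pw f y • ContinuousLinearMap.snd ℂ ℂ ℂ) y := by
    filter_upwards [hU.mem_nhds hp] with y hy
    have hy' := hf.differentiableAt (hU.mem_nhds hy)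
    exact hy'.fderiv_eq_pz_smul_fst_add_pw_smul_snd ▸ hy'.hasFDerivAt
  have := second_derivative_symmetric_of_eventually hf'
    ((hz.hasFDerivAt.smul_const (ContinuousLinearMap.fst ℂ ℂ ℂ)).add
      (hw.hasFDerivAt.smul_const (ContinuousLinearMap.snd ℂ ℂ ℂ))) (1, 0) (0, 1)
  simpa [hz.pw_eq_fderiv, hw.pz_eq_fderiv] using this

theorem Dplus_mul (hf : DifferentiableAt ℂ f p) (hg : DifferentiableAt ℂ g p) :
    Dplus (fun q => f q * g q) p = Dplus f p * g p + f p * Dplus g p := by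
  simp only [Dplus, pz_mul hf hg, pw_mul hf hg]
  ring

theorem Dminus_mul (hf : DifferentiableAt ℂ f p) (hg : DifferentiableAt ℂ g p) :
    Dminus (fun q => f q * g q) p = Dminus f p * g p + f p * Dminus g p := by
  simp only [Dminus, pz_mul hf hg, pw_mul hf hg]
  ring

theorem pz_invLap_coeff :
    pz (fun q => 4 * (1 - q.1 * q.2) ^ 2) p = -8 * p.2 * (1 - p.1 * p.2) := by
  refine (((((hasDerivAt_id' p.1).mul_const p.2).const_sub 1).pow 2).const_mul 4).deriv.trans ?_
  ring

theorem pw_invLap_coeff :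
    pw (fun q => 4 * (1 - q.1 * q.2) ^ 2) p = -8 * p.1 * (1 - p.1 * p.2) := by
  refine (((((hasDerivAt_id' p.2).const_mul p.1).const_sub 1).pow 2).const_mul 4).deriv.trans ?_
  ring

theorem Dplus_invLap_coeff :
    Dplus (fun q => 4 * (1 - q.1 * q.2) ^ 2) p = -2 * p.2 * (4 * (1 - p.1 * p.2) ^ 2) := by
  rw [Dplus, pz_invLap_coeff, pw_invLap_coeff]
  ring

theorem Dminus_invLap_coeff :
    Dminus (fun q => 4 * (1 - q.1 * q.2) ^ 2) p = -2 * p.1 * (4 * (1 - p.1 * p.2) ^ 2) := by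
  rw [Dminus, pz_invLap_coeff, pw_invLap_coeff]
  ring

theorem pz_pw_Dplus (hf : DifferentiableOn ℂ f U) (hU : IsOpen U) (hp : p ∈ U) :
    pz (pw (Dplus f)) p = Dplus (pz (pw f)) p - 2 * p.2 * pz (pw f) p := by
  have hAt : ∀ {g : ℂ × ℂ → ℂ}, DifferentiableOn ℂ g U → ∀ {q}, q ∈ U → DifferentiableAt ℂ g q :=
    fun hg _ hq => hg.differentiableAt (hU.mem_nhds hq)
  have hfz := differentiableOn_pz hf hU
  have hfw := differentiableOn_pw hf hU
  have hfzw := differentiableOn_pw hfz hU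
  have hfww := differentiableOn_pw hfw hU
  have hpw : pw (Dplus f) =ᶠ[𝓝 p]
      fun q => pw (pz f) q - (2 * q.2 * pw f q + q.2 ^ 2 * pw (pw f) q) := by
    filter_upwards [hU.mem_nhds hp] with q hq
    refine ((hAt hfz hq).hasDerivAt_pw.sub
      ((hasDerivAt_pow 2 q.2).mul (hAt hfw hq).hasDerivAt_pw)).deriv.trans ?_
    simp
  have hsym : pw (pz f) =ᶠ[𝓝 p] pz (pw f) := by
    filter_upwards [hU.mem_nhds hp] with q hq using (pz_pw_eq_pw_pz hf hU hq).symm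
  calc pz (pw (Dplus f)) p
      = pz (pw (pz f)) p - (2 * p.2 * pz (pw f) p + p.2 ^ 2 * pz (pw (pw f)) p) :=
        hpw.pz_eq.trans ((hAt hfzw hp).hasDerivAt_pz.sub
          (((hAt hfw hp).hasDerivAt_pz.const_mul (2 * p.2)).add
            ((hAt hfww hp).hasDerivAt_pz.const_mul (p.2 ^ 2)))).deriv
    _ = Dplus (pz (pw f)) p - 2 * p.2 * pz (pw f) p := by
        rw [hsym.pz_eq, pz_pw_eq_pw_pz hfw hU hp, Dplus]
        ring

theorem pz_pw_Dminus (hf : DifferentiableOn ℂ f U) (hU : IsOpen U) (hp : p ∈ U) :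
    pz (pw (Dminus f)) p = Dminus (pz (pw f)) p - 2 * p.1 * pz (pw f) p := by
  have hAt : ∀ {g : ℂ × ℂ → ℂ}, DifferentiableOn ℂ g U → ∀ {q}, q ∈ U → DifferentiableAt ℂ g q :=
    fun hg _ hq => hg.differentiableAt (hU.mem_nhds hq)
  have hfz := differentiableOn_pz hf hU
  have hfw := differentiableOn_pw hf hU
  have hfzw := differentiableOn_pw hfz hU
  have hfww := differentiableOn_pw hfw hU
  have hpw : pw (Dminus f) =ᶠ[𝓝 p] fun q => pw (pw f) q - q.1 ^ 2 * pw (pz f) q := by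
    filter_upwards [hU.mem_nhds hp] with q hq
    exact ((hAt hfw hq).hasDerivAt_pw.sub ((hAt hfz hq).hasDerivAt_pw.const_mul (q.1 ^ 2))).deriv
  have hsym : pw (pz f) =ᶠ[𝓝 p] pz (pw f) := by
    filter_upwards [hU.mem_nhds hp] with q hq using (pz_pw_eq_pw_pz hf hU hq).symm
  calc pz (pw (Dminus f)) p
      = pz (pw (pw f)) p - (2 * p.1 * pw (pz f) p + p.1 ^ 2 * pz (pw (pz f)) p) := by
        refine hpw.pz_eq.trans (((hAt hfww hp).hasDerivAt_pz.sub
          ((hasDerivAt_pow 2 p.1).mul (hAt hfzw hp).hasDerivAt_pz)).deriv.trans ?_)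
        simp
    _ = Dminus (pz (pw f)) p - 2 * p.1 * pz (pw f) p := by
        rw [hsym.pz_eq, pz_pw_eq_pw_pz hfw hU hp, ← pz_pw_eq_pw_pz hf hU hp, Dminus]
        ring

theorem InvLap_eq_mul : InvLap f = fun q => 4 * (1 - q.1 * q.2) ^ 2 * pz (pw f) q := rfl

end PartialDerivatives

/-- `D⁺` and `D⁻` commute with the invariant Laplacian on holomorphic functions. -/
theorem stmt12 (U : Set (ℂ × ℂ)) (hU : IsOpen U)
    (f : ℂ × ℂ → ℂ) (hf : DifferentiableOn ℂ f U) :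
    ∀ p ∈ U, Dplus (InvLap f) p = InvLap (Dplus f) p
      ∧ Dminus (InvLap f) p = InvLap (Dminus f) p := by
  intro p hp
  have hc : DifferentiableAt ℂ (fun q : ℂ × ℂ => 4 * (1 - q.1 * q.2) ^ 2) p := by fun_prop
  have hm : DifferentiableAt ℂ (pz (pw f)) p :=
    (differentiableOn_pz (differentiableOn_pw hf hU) hU).differentiableAt (hU.mem_nhds hp)
  simp only [InvLap_eq_mul]
  constructor
  · rw [Dplus_mul hc hm, Dplus_invLap_coeff, pz_pw_Dplus hf hU hp]
    ring
  · rw [Dminus_mul hc hm, Dminus_invLap_coeff, pz_pw_Dminus hf hU hp]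
    ring
end

section
/- Let U ⊆ ℂ² be a domain (connected open set) containing a point of the form (z₀, conj(z₀)), and let f : U → ℂ be holomorphic such that f(z, conj(z)) = 0 for all z with (z, conj(z)) ∈ U. Then f ≡ 0 on U. -/
/-!
In the coordinates `(u, v) ↦ (u + i v, u - i v)` the diagonal `{(z, z̄)}` becomes `ℝ² ⊆ ℂ²`, so
`f` turns into a holomorphic function vanishing at the real points near `(Re z₀, Im z₀)`; the
one-variable identity theorem, applied in each variable in turn, makes it vanish on a
neighbourhood. Restricting to complex lines, the identity theorem holds for holomorphic functions
of several variables, and it propagates this local vanishing over the connected set `U`.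
-/

open Complex ComplexConjugate Metric Filter Set Topology

section

variable {E F : Type*} [NormedAddCommGroup E] [NormedSpace ℂ E]
  [NormedAddCommGroup F] [NormedSpace ℂ F] [CompleteSpace F]

theorem DifferentiableOn.eqOn_zero_of_convex_of_eventuallyEq_zero {f : E → F} {U : Set E}
    (hf : DifferentiableOn ℂ f U) (hU : IsOpen U) (hUc : Convex ℝ U) {q : E} (hq : q ∈ U)
    (hfq : f =ᶠ[𝓝 q] 0) : EqOn f 0 U := by
  intro x hx
  set A : ℂ → E := fun t => q + t • (x - q)
  have hA : Continuous A := by fun_prop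
  have hS : Convex ℝ (A ⁻¹' U) := (hUc.translate_preimage_right q).linear_preimage
    ((LinearMap.toSpanSingleton ℂ E (x - q)).restrictScalars ℝ)
  have hg : AnalyticOnNhd ℂ (f ∘ A) (A ⁻¹' U) :=
    (hf.comp (by fun_prop) (mapsTo_preimage _ _)).analyticOnNhd (hU.preimage hA)
  have hg0 : f ∘ A =ᶠ[𝓝 0] 0 := by
    have : Tendsto A (𝓝 0) (𝓝 q) := by simpa [A] using hA.tendsto 0
    exact this.eventually hfq
  simpa [A] using hg.eqOn_zero_of_preconnected_of_eventuallyEq_zero hS.isPreconnected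
    (by simpa [A] using hq) hg0 (show (1 : ℂ) ∈ A ⁻¹' U by simpa [A] using hx)

theorem DifferentiableOn.eqOn_zero_of_preconnected_of_eventuallyEq_zero {f : E → F} {U : Set E}
    (hf : DifferentiableOn ℂ f U) (hU : IsOpen U) (hUc : IsPreconnected U) {z₀ : E}
    (hz₀ : z₀ ∈ U) (hfz₀ : f =ᶠ[𝓝 z₀] 0) : EqOn f 0 U := by
  set V := {p : E | f =ᶠ[𝓝 p] 0}
  have hclosure : closure V ∩ U ⊆ V := by
    rintro p ⟨hpV, hpU⟩
    obtain ⟨r, hr, hrU⟩ := Metric.isOpen_iff.1 hU p hpU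
    obtain ⟨q, hqV, hq⟩ := Metric.mem_closure_iff.1 hpV r hr
    have hball : EqOn f 0 (ball p r) :=
      (hf.mono hrU).eqOn_zero_of_convex_of_eventuallyEq_zero isOpen_ball (convex_ball p r)
        (mem_ball'.2 hq) hqV
    exact eventually_of_mem (ball_mem_nhds p hr) hball
  exact fun z hz => (hUc.subset_of_closure_inter_subset isOpen_setOfPred_eventually_nhds
    ⟨z₀, hz₀, hfz₀⟩ hclosure hz).self_of_nhds

theorem DifferentiableOn.eqOn_zero_of_forall_ofReal {g : ℂ → F} {U : Set ℂ}
    (hg : DifferentiableOn ℂ g U) (hU : IsOpen U) (hUc : IsPreconnected U) {x₀ : ℝ}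
    (hx₀ : (x₀ : ℂ) ∈ U) (hvan : ∀ x : ℝ, (x : ℂ) ∈ U → g x = 0) : EqOn g 0 U := by
  have hreal : Tendsto ((↑) : ℝ → ℂ) (𝓝[≠] x₀) (𝓝[≠] (x₀ : ℂ)) :=
    tendsto_nhdsWithin_of_tendsto_nhds_of_eventually_within _
      (continuous_ofReal.continuousWithinAt.tendsto)
      (eventually_mem_nhdsWithin.mono fun x hx => ofReal_injective.ne hx)
  have hU' : ∀ᶠ x : ℝ in 𝓝[≠] x₀, (x : ℂ) ∈ U :=
    nhdsWithin_le_nhds (continuous_ofReal.continuousAt.preimage_mem_nhds (hU.mem_nhds hx₀))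
  refine (hg.analyticOnNhd hU).eqOn_zero_of_preconnected_of_frequently_eq_zero hUc hx₀ ?_
  exact hreal.frequently (hU'.mono hvan).frequently

theorem DifferentiableOn.eqOn_zero_of_forall_ofReal_prod {g : ℂ × ℂ → F} {U V : Set ℂ}
    (hg : DifferentiableOn ℂ g (U ×ˢ V)) (hU : IsOpen U) (hUc : IsPreconnected U)
    (hV : IsOpen V) (hVc : IsPreconnected V) {x₀ y₀ : ℝ} (hx₀ : (x₀ : ℂ) ∈ U)
    (hy₀ : (y₀ : ℂ) ∈ V) (hvan : ∀ x y : ℝ, (x : ℂ) ∈ U → (y : ℂ) ∈ V → g (x, y) = 0) :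
    EqOn g 0 (U ×ˢ V) := by
  have hslice₁ : ∀ b ∈ V, DifferentiableOn ℂ (fun a => g (a, b)) U := fun b hb =>
    hg.comp (by fun_prop) fun a ha => mk_mem_prod ha hb
  have hslice₂ : ∀ a ∈ U, DifferentiableOn ℂ (fun b => g (a, b)) V := fun a ha =>
    hg.comp (by fun_prop) fun b hb => mk_mem_prod ha hb
  have hrealV : ∀ y : ℝ, (y : ℂ) ∈ V → ∀ a ∈ U, g (a, y) = 0 := fun y hy =>
    (hslice₁ y hy).eqOn_zero_of_forall_ofReal hU hUc hx₀ fun x hx => hvan x y hx hy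
  rintro ⟨a, b⟩ ⟨ha, hb⟩
  exact (hslice₂ a ha).eqOn_zero_of_forall_ofReal hV hVc hy₀ (fun y hy => hrealV y hy a ha) hb

def diagCoords (p : ℂ × ℂ) : ℂ × ℂ := (p.1 + I * p.2, p.1 - I * p.2)

theorem differentiable_diagCoords : Differentiable ℂ diagCoords := by
  unfold diagCoords; fun_prop

theorem diagCoords_re_im (z : ℂ) : diagCoords ((z.re : ℂ), (z.im : ℂ)) = (z, conj z) := by
  simp only [diagCoords, Prod.mk.injEq]
  constructor <;> apply Complex.ext <;> simp

noncomputable def diagCoordsInv (p : ℂ × ℂ) : ℂ × ℂ := ((p.1 + p.2) / 2, (p.1 - p.2) / (2 * I))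

theorem continuous_diagCoordsInv : Continuous diagCoordsInv := by
  unfold diagCoordsInv; fun_prop

theorem diagCoords_diagCoordsInv (p : ℂ × ℂ) : diagCoords (diagCoordsInv p) = p := by
  simp only [diagCoords, diagCoordsInv]
  ext <;> field_simp <;> ring

theorem diagCoordsInv_conj (z : ℂ) : diagCoordsInv (z, conj z) = ((z.re : ℂ), (z.im : ℂ)) := by
  simp only [diagCoordsInv, re_eq_add_conj, im_eq_sub_conj]

theorem eventuallyEq_zero_of_forall_conj {f : ℂ × ℂ → F} {U : Set (ℂ × ℂ)}
    (hf : DifferentiableOn ℂ f U) (hU : IsOpen U) {z₀ : ℂ} (hz₀ : (z₀, conj z₀) ∈ U)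
    (hvan : ∀ z : ℂ, (z, conj z) ∈ U → f (z, conj z) = 0) :
    f =ᶠ[𝓝 (z₀, conj z₀)] 0 := by
  obtain ⟨ε, hε, hεU⟩ := Metric.isOpen_iff.1 (hU.preimage differentiable_diagCoords.continuous)
    ((z₀.re : ℂ), (z₀.im : ℂ)) (by rwa [mem_preimage, diagCoords_re_im])
  rw [← ball_prod_same] at hεU
  have hball : EqOn (f ∘ diagCoords) 0 (ball (z₀.re : ℂ) ε ×ˢ ball (z₀.im : ℂ) ε) := by
    refine DifferentiableOn.eqOn_zero_of_forall_ofReal_prod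
      (hf.comp differentiable_diagCoords.differentiableOn hεU) isOpen_ball
      (convex_ball _ _).isPreconnected isOpen_ball (convex_ball _ _).isPreconnected
      (mem_ball_self hε) (mem_ball_self hε) fun x y hx hy => ?_
    have hxy : diagCoords (x, y) = (⟨x, y⟩, conj ⟨x, y⟩) := diagCoords_re_im ⟨x, y⟩
    have hmem := hεU (mk_mem_prod hx hy)
    rw [mem_preimage, hxy] at hmem
    simpa [hxy] using hvan _ hmem
  have hinv : Tendsto diagCoordsInv (𝓝 (z₀, conj z₀)) (𝓝 ((z₀.re : ℂ), (z₀.im : ℂ))) := by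
    simpa only [diagCoordsInv_conj] using continuous_diagCoordsInv.tendsto (z₀, conj z₀)
  filter_upwards [hinv.eventually (eventually_of_mem
    (prod_mem_nhds (ball_mem_nhds _ hε) (ball_mem_nhds _ hε)) hball)] with p hp
  rwa [Function.comp_apply, diagCoords_diagCoordsInv] at hp

end

/-- Two-variable identity principle: a holomorphic function on a domain
`U ⊆ ℂ²` meeting the diagonal `{(z, z̄)}` that vanishes on that diagonal
vanishes identically on `U`. -/
theorem stmt16 (U : Set (ℂ × ℂ)) (hU : IsOpen U) (hUconn : IsConnected U)
    (z₀ : ℂ) (hz₀ : (z₀, (starRingEnd ℂ) z₀) ∈ U)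
    (f : ℂ × ℂ → ℂ) (hf : DifferentiableOn ℂ f U)
    (hvan : ∀ z : ℂ, (z, (starRingEnd ℂ) z) ∈ U → f (z, (starRingEnd ℂ) z) = 0) :
    ∀ p ∈ U, f p = 0 :=
  hf.eqOn_zero_of_preconnected_of_eventuallyEq_zero hU hUconn.isPreconnected hz₀
    (eventuallyEq_zero_of_forall_conj hf hU hz₀ hvan)
end
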